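/- For all integers m ≥ 0 and I ≥ 1, Σ_{k=0}^{I} (−1)^k · C(m+2k, k) · ( C(m+I+k, m+2k) + C(m+I+k−1, m+2k) ) = 0. (For I = 0 the corresponding sum equals 1.) -/
import Mathlib

/-- Integer binomial coefficient `C(a,b)` with the convention that it is `0`
whenever `a < 0` or `b < 0` (and, via `Nat.choose`, whenever `b > a`). -/
def intChoose (a b : ℤ) : ℤ :=
  if 0 ≤ a ∧ 0 ≤ b then (Nat.choose a.toNat b.toNat : ℤ) else 0

lemma intChoose_natCast (a b : ℕ) : intChoose (a : ℤ) (b : ℤ) = (Nat.choose a b : ℤ) := by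
  simp [intChoose]


lemma key (m k d : ℕ) :
    (k+1) * (k+m+1) * Nat.choose (m+2*k+2) (k+1) *
      (Nat.choose (m+2*k+d+2) (m+2*k+2) + Nat.choose (m+2*k+d+1) (m+2*k+2)) =
    (d+1) * (m+2*k+d+1) * Nat.choose (m+2*k) k *
      (Nat.choose (m+2*k+d+1) (m+2*k) + Nat.choose (m+2*k+d) (m+2*k)) := by
  set r := m + 2*k with hr
  -- hypotheses over ℕ
  have h1 : (r+1) * Nat.choose r k = Nat.choose (r+1) (k+1) * (k+1) := by
    simpa using Nat.add_one_mul_choose_eq r k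
  have h2 : Nat.choose (r+1) (k+1) * (r+2) = Nat.choose (r+2) (k+1) * (k+m+1) := by
    have := Nat.choose_mul_succ_eq (r+1) (k+1)
    have hx : r + 1 + 1 - (k+1) = k+m+1 := by omega
    rw [hx] at this
    simpa using this
  have h3 : Nat.choose (r+d+2) (r+2) * (r+2) = Nat.choose (r+d+2) (r+1) * (d+1) := by
    have := Nat.choose_succ_right_eq (r+d+2) (r+1)
    have hx : r+d+2 - (r+1) = d+1 := by omega
    rw [hx] at this; simpa using this
  have h4 : Nat.choose (r+d+2) (r+1) * (r+1) = Nat.choose (r+d+2) r * (d+2) := by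
    have := Nat.choose_succ_right_eq (r+d+2) r
    have hx : r+d+2 - r = d+2 := by omega
    rw [hx] at this; simpa using this
  have h5 : Nat.choose (r+d+1) (r+2) * (r+2) = Nat.choose (r+d+1) (r+1) * d := by
    have := Nat.choose_succ_right_eq (r+d+1) (r+1)
    have hx : r+d+1 - (r+1) = d := by omega
    rw [hx] at this; simpa using this
  have h6 : Nat.choose (r+d+1) (r+1) * (r+1) = Nat.choose (r+d+1) r * (d+1) := by
    have := Nat.choose_succ_right_eq (r+d+1) r
    have hx : r+d+1 - r = d+1 := by omega
    rw [hx] at this; simpa using this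
  have h7 : (r+d+1) * Nat.choose (r+d) r = Nat.choose (r+d+1) (r+1) * (r+1) := by
    simpa using Nat.add_one_mul_choose_eq (r+d) r
  have h8 : (r+d+2) * Nat.choose (r+d+1) r = Nat.choose (r+d+2) (r+1) * (r+1) := by
    simpa using Nat.add_one_mul_choose_eq (r+d+1) r
  -- work in ℚ
  have hrn : ((r:ℚ)+1) ≠ 0 := by positivity
  have hrn2 : ((r:ℚ)+2) ≠ 0 := by positivity
  have hkn : ((k:ℚ)+1) ≠ 0 := by positivity
  have hkm : ((k:ℚ)+m+1) ≠ 0 := by positivity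
  have hd2 : ((d:ℚ)+2) ≠ 0 := by positivity
  have hrd : ((r:ℚ)+d+1) ≠ 0 := by positivity
  have q1 : ((r:ℚ)+1) * Nat.choose r k = Nat.choose (r+1) (k+1) * ((k:ℚ)+1) := by exact_mod_cast h1
  have q2 : (Nat.choose (r+1) (k+1) : ℚ) * ((r:ℚ)+2) = Nat.choose (r+2) (k+1) * ((k:ℚ)+m+1) := by exact_mod_cast h2
  have q3 : (Nat.choose (r+d+2) (r+2) : ℚ) * ((r:ℚ)+2) = Nat.choose (r+d+2) (r+1) * ((d:ℚ)+1) := by exact_mod_cast h3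
  have q4 : (Nat.choose (r+d+2) (r+1) : ℚ) * ((r:ℚ)+1) = Nat.choose (r+d+2) r * ((d:ℚ)+2) := by exact_mod_cast h4
  have q5 : (Nat.choose (r+d+1) (r+2) : ℚ) * ((r:ℚ)+2) = Nat.choose (r+d+1) (r+1) * (d:ℚ) := by exact_mod_cast h5
  have q6 : (Nat.choose (r+d+1) (r+1) : ℚ) * ((r:ℚ)+1) = Nat.choose (r+d+1) r * ((d:ℚ)+1) := by exact_mod_cast h6
  have q7 : ((r:ℚ)+d+1) * Nat.choose (r+d) r = Nat.choose (r+d+1) (r+1) * ((r:ℚ)+1) := by exact_mod_cast h7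
  have q8 : ((r:ℚ)+d+2) * Nat.choose (r+d+1) r = Nat.choose (r+d+2) (r+1) * ((r:ℚ)+1) := by exact_mod_cast h8
  have goalQ : ((k:ℚ)+1) * ((k:ℚ)+m+1) * Nat.choose (r+2) (k+1) *
      ((Nat.choose (r+d+2) (r+2) : ℚ) + Nat.choose (r+d+1) (r+2)) =
      ((d:ℚ)+1) * ((r:ℚ)+d+1) * Nat.choose r k *
      ((Nat.choose (r+d+1) r : ℚ) + Nat.choose (r+d) r) := by
    have eB : (Nat.choose (r+2) (k+1) : ℚ) = ((r:ℚ)+1)*((r:ℚ)+2)*Nat.choose r k / (((k:ℚ)+1)*((k:ℚ)+m+1)) := by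
      field_simp
      linear_combination (-((r:ℚ)+2)) * q1 - ((k:ℚ)+1) * q2
    have eP2 : (Nat.choose (r+d+2) (r+2) : ℚ) = ((d:ℚ)+1)*((d:ℚ)+2)*Nat.choose (r+d+2) r / (((r:ℚ)+1)*((r:ℚ)+2)) := by
      field_simp
      linear_combination ((r:ℚ)+1) * q3 + ((d:ℚ)+1) * q4
    have eQ2 : (Nat.choose (r+d+1) (r+2) : ℚ) = (d:ℚ)*((d:ℚ)+1)*Nat.choose (r+d+1) r / (((r:ℚ)+1)*((r:ℚ)+2)) := by
      field_simp
      linear_combination ((r:ℚ)+1) * q5 + (d:ℚ) * q6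
    have eR0 : (Nat.choose (r+d) r : ℚ) = ((d:ℚ)+1)*Nat.choose (r+d+1) r / ((r:ℚ)+d+1) := by
      field_simp
      linear_combination q7 + q6
    have eP0 : (Nat.choose (r+d+2) r : ℚ) = ((r:ℚ)+d+2)*Nat.choose (r+d+1) r / ((d:ℚ)+2) := by
      field_simp
      linear_combination -q4 - q8
    rw [eB, eP2, eQ2, eR0, eP0]
    field_simp
    ring
  exact_mod_cast goalQ


/-- For all integers `m ≥ 0` and `I ≥ 1`,
`∑_{k=0}^{I} (−1)^k C(m+2k,k) (C(m+I+k, m+2k) + C(m+I+k−1, m+2k)) = 0`;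
for `I = 0` the corresponding sum equals `1`. -/
theorem off_diagonal_vanishing (m I : ℕ) (hI : 1 ≤ I) :
    (∑ k ∈ Finset.range (I + 1),
      (-1 : ℤ) ^ k * (Nat.choose (m + 2 * k) k : ℤ) *
        (intChoose ((m : ℤ) + I + k) ((m : ℤ) + 2 * k) +
         intChoose ((m : ℤ) + I + k - 1) ((m : ℤ) + 2 * k))) = 0 ∧
    (∑ k ∈ Finset.range (0 + 1),
      (-1 : ℤ) ^ k * (Nat.choose (m + 2 * k) k : ℤ) *
        (intChoose ((m : ℤ) + 0 + k) ((m : ℤ) + 2 * k) +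
         intChoose ((m : ℤ) + 0 + k - 1) ((m : ℤ) + 2 * k))) = 1 := by
  constructor
  · -- main part
    have hsum : (∑ k ∈ Finset.range (I + 1),
        (-1 : ℤ) ^ k * (Nat.choose (m + 2 * k) k : ℤ) *
          (intChoose ((m : ℤ) + I + k) ((m : ℤ) + 2 * k) +
           intChoose ((m : ℤ) + I + k - 1) ((m : ℤ) + 2 * k))) =
        ∑ k ∈ Finset.range (I + 1),
          (-1 : ℤ) ^ k * (Nat.choose (m + 2 * k) k : ℤ) *
            ((Nat.choose (m + I + k) (m + 2 * k) : ℤ) +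
             (Nat.choose (m + I + k - 1) (m + 2 * k) : ℤ)) := by
      refine Finset.sum_congr rfl fun k _ => ?_
      have c1 : ((m : ℤ) + I + k) = ((m + I + k : ℕ) : ℤ) := by push_cast; ring
      have c2 : ((m : ℤ) + 2 * k) = ((m + 2 * k : ℕ) : ℤ) := by push_cast; ring
      have c3 : ((m : ℤ) + I + k - 1) = ((m + I + k - 1 : ℕ) : ℤ) := by omega
      rw [c3, c1, c2, intChoose_natCast, intChoose_natCast]
    rw [hsum]
    set g : ℕ → ℤ := fun k => (-1) ^ (k + 1) * ((k : ℤ) * ((k : ℤ) + m)) *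
        (Nat.choose (m + 2 * k) k : ℤ) *
        ((Nat.choose (m + I + k) (m + 2 * k) : ℤ) +
         (Nat.choose (m + I + k - 1) (m + 2 * k) : ℤ)) with hg
    have hg0 : g 0 = 0 := by simp [hg]
    have hgI : g (I + 1) = 0 := by
      have c1 : Nat.choose (m + I + (I + 1)) (m + 2 * (I + 1)) = 0 :=
        Nat.choose_eq_zero_of_lt (by omega)
      have c2 : Nat.choose (m + I + I) (m + 2 * (I + 1)) = 0 :=
        Nat.choose_eq_zero_of_lt (by omega)
      simp [hg, c1, c2]
    have htele : ((I : ℤ) * ((I : ℤ) + m)) *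
        (∑ k ∈ Finset.range (I + 1),
          (-1 : ℤ) ^ k * (Nat.choose (m + 2 * k) k : ℤ) *
            ((Nat.choose (m + I + k) (m + 2 * k) : ℤ) +
             (Nat.choose (m + I + k - 1) (m + 2 * k) : ℤ))) = g (I + 1) - g 0 := by
      rw [← Finset.sum_range_sub g (I + 1), Finset.mul_sum]
      refine Finset.sum_congr rfl fun k hk => ?_
      have hkI : k ≤ I := Nat.lt_succ_iff.mp (Finset.mem_range.mp hk)
      rcases eq_or_lt_of_le hkI with hEq | hlt
      · subst hEq
        have c1 : Nat.choose (m + k + (k + 1)) (m + 2 * (k + 1)) = 0 :=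
          Nat.choose_eq_zero_of_lt (by omega)
        have c2 : Nat.choose (m + k + (k + 1) - 1) (m + 2 * (k + 1)) = 0 :=
          Nat.choose_eq_zero_of_lt (by omega)
        simp only [hg, c1, c2]
        push_cast
        ring
      · obtain ⟨d, rfl⟩ : ∃ d, I = k + d + 1 := ⟨I - k - 1, by omega⟩
        have hkey := key m k d
        have hkZ : ((k : ℤ) + 1) * ((k : ℤ) + m + 1) * (Nat.choose (m + 2 * k + 2) (k + 1) : ℤ) *
            ((Nat.choose (m + 2 * k + d + 2) (m + 2 * k + 2) : ℤ) +
             (Nat.choose (m + 2 * k + d + 1) (m + 2 * k + 2) : ℤ)) =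
            ((d : ℤ) + 1) * ((m : ℤ) + 2 * k + d + 1) * (Nat.choose (m + 2 * k) k : ℤ) *
            ((Nat.choose (m + 2 * k + d + 1) (m + 2 * k) : ℤ) +
             (Nat.choose (m + 2 * k + d) (m + 2 * k) : ℤ)) := by exact_mod_cast hkey
        simp only [hg]
        have a1 : m + (k + d + 1) + k = m + 2 * k + d + 1 := by ring
        have a2 : m + (k + d + 1) + k - 1 = m + 2 * k + d := by omega
        have a3 : m + (k + d + 1) + (k + 1) = m + 2 * k + d + 2 := by ring
        have a4 : m + (k + d + 1) + (k + 1) - 1 = m + 2 * k + d + 1 := by omega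
        have a5 : m + 2 * (k + 1) = m + 2 * k + 2 := by ring
        rw [a2, a4, a1, a3, a5]
        push_cast
        linear_combination (-(-1 : ℤ) ^ k) * hkZ
    have hne : ((I : ℤ) * ((I : ℤ) + m)) ≠ 0 := by
      have : (0 : ℤ) < (I : ℤ) * ((I : ℤ) + m) := by positivity
      exact ne_of_gt this
    rw [hgI, hg0, sub_zero] at htele
    exact (mul_eq_zero.mp htele).resolve_left hne
  · -- I = 0 part
    rw [Finset.sum_range_one]
    simp only [Nat.cast_zero]
    have h1 : intChoose ((m : ℤ) + 0 + 0) ((m : ℤ) + 2 * 0) = 1 := by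
      rw [show (m : ℤ) + 0 + 0 = ((m : ℕ) : ℤ) by ring,
        show (m : ℤ) + 2 * 0 = ((m : ℕ) : ℤ) by ring, intChoose_natCast]
      simp
    have h2 : intChoose ((m : ℤ) + 0 + 0 - 1) ((m : ℤ) + 2 * 0) = 0 := by
      rcases Nat.eq_zero_or_pos m with hm | hm
      · subst hm
        simp [intChoose]
      · rw [show (m : ℤ) + 0 + 0 - 1 = ((m - 1 : ℕ) : ℤ) by omega,
          show (m : ℤ) + 2 * 0 = ((m : ℕ) : ℤ) by ring, intChoose_natCast,
          Nat.choose_eq_zero_of_lt (by omega)]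
        simp
    rw [h1, h2]
    simp
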